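/- For m ≥ 2, let α_m = 2·cos(π/(m+1)). Then the rational function F̂_m(x) = F_m(x)/(x − α_m) extends to a polynomial that is nonpositive for x < α_m and strictly positive for x > α_m. -/

import Mathlib

open Real

noncomputable def chebV (m : ℕ) (x : ℝ) : ℝ := (Polynomial.Chebyshev.U ℝ m).eval (x / 2)

noncomputable def chebF (m : ℕ) (x : ℝ) : ℝ := ∑ j ∈ Finset.range (m + 1), chebV (2 * j) x

/-!
`V_j` is the Vieta–Fibonacci polynomial `S_j`. The addition formula
`S (m + n) = S m * S n - S (m - 1) * S (n - 1)` gives `S (2j + 2) = S (j + 1) ^ 2 - S j ^ 2`, so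
`F_m` telescopes to `S_m ^ 2`. As `α_m` is the largest real root of `S_m`, we get
`S_m = (X - α_m) * q` with `q` free of zeros beyond `α_m`, and `F̂_m = (X - α_m) * q ^ 2`.
-/

open Polynomial Polynomial.Chebyshev

namespace Polynomial.Chebyshev

variable (R : Type*) [CommRing R]

theorem S_add (m n : ℤ) : S R (m + n) = S R m * S R n - S R (m - 1) * S R (n - 1) := by
  induction n using Polynomial.Chebyshev.induct with
  | zero => simp
  | one => rw [S_add_one, S_one, sub_self, S_zero]; ring
  | add_two n ih1 ih2 =>
    have h₁ := S_add_two R (m + n)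
    have h₂ := S_add_two R n
    have h₃ := S_add_one R n
    linear_combination (norm := ring_nf) h₁ + X * ih1 - ih2 - S R m * h₂ + S R (m - 1) * h₃
  | neg_add_one n ih1 ih2 =>
    have h₁ := S_sub_one R (m - n)
    have h₂ := S_sub_one R (-n)
    have h₃ := S_sub_one R (-n - 1)
    linear_combination (norm := ring_nf) h₁ + X * ih1 - ih2 - S R m * h₂ + S R (m - 1) * h₃

theorem sum_range_S_two_mul (n : ℕ) :
    ∑ j ∈ Finset.range (n + 1), S R (2 * j) = S R n ^ 2 := by
  induction n with
  | zero => simp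
  | succ n ih =>
    rw [Finset.sum_range_succ, ih]
    have h := S_add R (n + 1) (n + 1)
    push_cast
    linear_combination (norm := ring_nf) h

theorem S_eval_eq_U_eval_div_two {K : Type*} [Field K] [NeZero (2 : K)] (n : ℤ) (x : K) :
    (S K n).eval x = (U K n).eval (x / 2) := by
  rw [← S_comp_two_mul_X, eval_comp]
  simp [mul_div_cancel₀ x two_ne_zero]

theorem U_real_eval_cos_pi_div {n : ℕ} (hn : n ≠ 0) : (U ℝ n).eval (cos (π / (n + 1))) = 0 := by
  have hroot : cos (π / (n + 1)) ∈ (U ℝ n).roots := by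
    rw [roots_U_real]
    simpa using ⟨0, Nat.pos_of_ne_zero hn, by simp⟩
  exact (mem_roots (U_ne_zero ℝ n (by omega))).mp hroot

theorem U_real_eval_ne_zero_of_cos_pi_div_lt (n : ℕ) {y : ℝ} (hy : cos (π / (n + 1)) < y) :
    (U ℝ n).eval y ≠ 0 := by
  intro h
  have hroot : y ∈ (U ℝ n).roots := (mem_roots (U_ne_zero ℝ n (by omega))).mpr h
  rw [roots_U_real] at hroot
  obtain ⟨k, hk, rfl⟩ := by simpa using hroot
  refine hy.not_ge (cos_le_cos_of_nonneg_of_le_pi (by positivity) ?_ ?_)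
  · rw [div_le_iff₀ (by positivity)]
    have : (k : ℝ) + 1 ≤ n := by exact_mod_cast hk
    nlinarith [pi_pos]
  · rw [mul_div_assoc]
    exact le_mul_of_one_le_left (by positivity) (by simp)

end Polynomial.Chebyshev

theorem exists_eval_sq_eq_sub_mul_of_isRoot {g : ℝ[X]} {a : ℝ} (hroot : g.IsRoot a)
    (hne : ∀ x, a < x → g.eval x ≠ 0) :
    ∃ p : ℝ[X], (∀ x, g.eval x ^ 2 = (x - a) * p.eval x) ∧ (∀ x < a, p.eval x ≤ 0) ∧
      ∀ x, a < x → 0 < p.eval x := by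
  obtain ⟨q, hq⟩ := dvd_iff_isRoot.mpr hroot
  have hg (x : ℝ) : g.eval x = (x - a) * q.eval x := by simp [hq]
  refine ⟨(X - C a) * q ^ 2, fun x => ?_, fun x hx => ?_, fun x hx => ?_⟩
  all_goals simp only [eval_mul, eval_pow, eval_sub, eval_X, eval_C]
  · rw [hg]; ring
  · exact mul_nonpos_of_nonpos_of_nonneg (by linarith) (sq_nonneg _)
  · have hqx : q.eval x ≠ 0 := right_ne_zero_of_mul (hg x ▸ hne x hx)
    exact mul_pos (sub_pos.mpr hx) (sq_pos_of_ne_zero hqx)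

theorem chebF_eq_sq (m : ℕ) (x : ℝ) : chebF m x = (S ℝ m).eval x ^ 2 := by
  simp only [chebF, chebV, ← S_eval_eq_U_eval_div_two, ← eval_finsetSum, ← eval_pow,
    ← sum_range_S_two_mul, Nat.cast_mul, Nat.cast_ofNat]

/-- For `m ≥ 2` and `α_m = 2 cos (π/(m+1))`, the rational function `F_m(x)/(x - α_m)`
extends to a polynomial which is nonpositive for `x < α_m` and positive for `x > α_m`. -/
theorem chebFhat_sign (m : ℕ) (hm : 2 ≤ m) :
    ∃ p : Polynomial ℝ,
      (∀ x : ℝ, chebF m x = (x - 2 * Real.cos (π / (m + 1))) * p.eval x) ∧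
      (∀ x : ℝ, x < 2 * Real.cos (π / (m + 1)) → p.eval x ≤ 0) ∧
      (∀ x : ℝ, 2 * Real.cos (π / (m + 1)) < x → 0 < p.eval x) := by
  have hroot : (S ℝ m).IsRoot (2 * cos (π / (m + 1))) := by
    rw [IsRoot.def, S_eval_eq_U_eval_div_two, mul_div_cancel_left₀ _ two_ne_zero]
    exact U_real_eval_cos_pi_div (by omega)
  have hne (x : ℝ) (hx : 2 * cos (π / (m + 1)) < x) : (S ℝ m).eval x ≠ 0 := by
    rw [S_eval_eq_U_eval_div_two]
    exact U_real_eval_ne_zero_of_cos_pi_div_lt m (by linarith)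
  obtain ⟨p, hp, hneg, hpos⟩ := exists_eval_sq_eq_sub_mul_of_isRoot hroot hne
  exact ⟨p, fun x => (chebF_eq_sq m x).trans (hp x), hneg, hpos⟩
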